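/- Let ω > v²/(τ²+1)², τ ∈ ℝ \ {0,±1}, v > 0, μ > 0, and let (u_n) be a minimizing sequence for S̃ over {u ∈ H¹_τ \ {0} : I_ω(u) ≤ 0}. Then lim_{n→∞} I_ω(u_n) = 0. -/

import Mathlib

open MeasureTheory Set Filter Real

noncomputable section

/-- The space `H¹_τ`: piecewise `H¹` functions on the two half-lines with jump condition
`u(0+) = τ u(0-)` (together with the extra integrability needed for the functionals). -/
structure HtauFun (τ μ : ℝ) where
  u : ℝ → ℝ
  d : ℝ → ℝ
  uL : ℝ
  uR : ℝ
  hderiv : ∀ x : ℝ, x ≠ 0 → HasDerivAt u (d x) x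
  hlimL : Tendsto u (nhdsWithin 0 (Iio 0)) (nhds uL)
  hlimR : Tendsto u (nhdsWithin 0 (Ioi 0)) (nhds uR)
  hint2 : Integrable (fun x => (u x) ^ 2)
  hintd : Integrable (fun x => (d x) ^ 2)
  hintp : Integrable (fun x => |u x| ^ (2 * μ + 2))
  hjump : uR = τ * uL

/-- `‖u'‖₂²` taken piecewise on the two half-lines. -/
def dnormSq (g : ℝ → ℝ) : ℝ :=
  (∫ x in Iio (0:ℝ), (g x) ^ 2) + ∫ x in Ioi (0:ℝ), (g x) ^ 2

/-- `‖u‖₂²`. -/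
def l2Sq (f : ℝ → ℝ) : ℝ := ∫ x : ℝ, (f x) ^ 2

/-- `‖u‖_{2μ+2}^{2μ+2}`. -/
def lpP (μ : ℝ) (f : ℝ → ℝ) : ℝ := ∫ x : ℝ, |f x| ^ (2 * μ + 2)

/-- Squared `H¹_τ` norm. -/
def HnormSq (f g : ℝ → ℝ) : ℝ := l2Sq f + dnormSq g

/-- The Nehari functional `I_ω`. -/
def Ifun (v ω μ : ℝ) (f g : ℝ → ℝ) (aL : ℝ) : ℝ :=
  dnormSq g - lpP μ f - v * aL ^ 2 + ω * l2Sq f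

/-- The action functional `S_ω`. -/
def Sfun (v ω μ : ℝ) (f g : ℝ → ℝ) (aL : ℝ) : ℝ :=
  dnormSq g / 2 - lpP μ f / (2 * μ + 2) - v / 2 * aL ^ 2 + ω / 2 * l2Sq f

/-- The reduced action `S̃`. -/
def StilF (μ : ℝ) (f : ℝ → ℝ) : ℝ := μ / (2 * (μ + 1)) * lpP μ f

/-- `u ≠ 0` as an element of `H¹_τ`. -/
def Nonzero {τ μ : ℝ} (U : HtauFun τ μ) : Prop :=
  ¬ (U.u =ᵐ[volume] fun _ => (0:ℝ))

/-- The ground-state level `d(ω)`: infimum of `S_ω` on the Nehari manifold. -/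
def dInf (τ v ω μ : ℝ) : ℝ :=
  sInf {r : ℝ | ∃ U : HtauFun τ μ, Nonzero U ∧
    Ifun v ω μ U.u U.d U.uL = 0 ∧ r = Sfun v ω μ U.u U.d U.uL}

/-- The level of the second minimization problem: infimum of `S̃` on `{I_ω ≤ 0}`. -/
def dInf' (τ v ω μ : ℝ) : ℝ :=
  sInf {r : ℝ | ∃ U : HtauFun τ μ, Nonzero U ∧
    Ifun v ω μ U.u U.d U.uL ≤ 0 ∧ r = StilF μ U.u}

open Topology

/-! The quadratic part `‖u'‖² - v u(0-)² + ω‖u‖²` of `I_ω` is nonnegative. Indeed the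
trace identities `u(0-)² = ∫_{x<0} 2uu'` and `u(0+)² = -∫_{x>0} 2uu'`, together with the jump
condition `u(0+) = τ u(0-)`, give `(1 + τ²) u(0-)² ≤ t‖u'‖² + t⁻¹‖u‖²` for every `t > 0`; the
choice `t = (τ² + 1)/v` absorbs the point interaction as soon as `ω > v²/(τ² + 1)²`.

Hence if `I_ω(u_n) ≤ -ε` infinitely often, the rescaling `β u_n` with
`β^{2μ} = 1 - ε/(2‖u_n‖^{2μ+2}_{2μ+2}) < 1` still satisfies `I_ω ≤ 0`, but
`S̃(β u_n) ≤ S̃(u_n) - μ ε/(4(μ + 1))`, which contradicts `S̃(u_n) → inf S̃`. -/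

lemma integral_Ioi_eq_neg_of_hasDerivAt_of_tendsto {g g' : ℝ → ℝ} {a m : ℝ}
    (hderiv : ∀ x ∈ Ioi a, HasDerivAt g (g' x) x) (hlim : Tendsto g (𝓝[>] a) (𝓝 m))
    (hg : IntegrableOn g (Ioi a)) (hg' : IntegrableOn g' (Ioi a)) :
    ∫ x in Ioi a, g' x = -m := by
  classical
  have hcont : ContinuousWithinAt (Function.update g a m) (Ici a) a := by
    rwa [continuousWithinAt_update_same, ← Ioi_insert,
      insert_sdiff_self_of_notMem self_notMem_Ioi]
  have hderiv' : ∀ x ∈ Ioi a, HasDerivAt (Function.update g a m) (g' x) x := fun x hx =>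
    (hderiv x hx).congr_of_eventuallyEq <| by
      filter_upwards [eventually_ne_nhds (ne_of_gt hx)] with y hy
      exact Function.update_of_ne hy _ _
  have htop : Tendsto (Function.update g a m) atTop (𝓝 0) := by
    refine (tendsto_zero_of_hasDerivAt_of_integrableOn_Ioi hderiv hg' hg).congr' ?_
    filter_upwards [eventually_gt_atTop a] with x hx
    exact (Function.update_of_ne (ne_of_gt hx) _ _).symm
  rw [integral_Ioi_of_hasDerivAt_of_tendsto hcont hderiv' hg' htop, Function.update_self,
    zero_sub]

lemma integral_Iio_eq_of_hasDerivAt_of_tendsto {g g' : ℝ → ℝ} {a m : ℝ}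
    (hderiv : ∀ x ∈ Iio a, HasDerivAt g (g' x) x) (hlim : Tendsto g (𝓝[<] a) (𝓝 m))
    (hg : IntegrableOn g (Iio a)) (hg' : IntegrableOn g' (Iio a)) :
    ∫ x in Iio a, g' x = m := by
  classical
  have hcont : ContinuousWithinAt (Function.update g a m) (Iic a) a := by
    rwa [continuousWithinAt_update_same, Iic_sdiff_right]
  have hderiv' : ∀ x ∈ Iio a, HasDerivAt (Function.update g a m) (g' x) x := fun x hx =>
    (hderiv x hx).congr_of_eventuallyEq <| by
      filter_upwards [eventually_ne_nhds (ne_of_lt hx)] with y hy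
      exact Function.update_of_ne hy _ _
  have hsub : Iic (a - 1) ⊆ Iio a := Iic_subset_Iio.2 (by linarith)
  have hbot : Tendsto (Function.update g a m) atBot (𝓝 0) := by
    refine (tendsto_zero_of_hasDerivAt_of_integrableOn_Iic (a := a - 1)
      (fun x hx => hderiv x (hsub hx)) (hg'.mono_set hsub) (hg.mono_set hsub)).congr' ?_
    filter_upwards [eventually_lt_atBot a] with x hx
    exact (Function.update_of_ne (ne_of_lt hx) _ _).symm
  rw [← integral_Iic_eq_integral_Iio, integral_Iic_of_hasDerivAt_of_tendsto hcont hderiv'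
    ((integrableOn_Iic_iff_integrableOn_Iio (f := g')).2 hg') hbot, Function.update_self,
    sub_zero]

lemma abs_two_mul_le {t : ℝ} (ht : 0 < t) (x y : ℝ) :
    |2 * x * y| ≤ t * y ^ 2 + t⁻¹ * x ^ 2 := by
  have hplus : t⁻¹ * (t * y + x) ^ 2 = t * y ^ 2 + t⁻¹ * x ^ 2 + 2 * x * y := by
    field_simp; ring
  have hminus : t⁻¹ * (t * y - x) ^ 2 = t * y ^ 2 + t⁻¹ * x ^ 2 - 2 * x * y := by
    field_simp; ring
  have : 0 ≤ t⁻¹ * (t * y + x) ^ 2 := by positivity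
  have : 0 ≤ t⁻¹ * (t * y - x) ^ 2 := by positivity
  rw [abs_le]
  constructor <;> linarith

lemma abs_integral_two_mul_le {α : Type*} [MeasurableSpace α] {ν : Measure α} {f g : α → ℝ}
    {t : ℝ} (ht : 0 < t) (hf : Integrable (fun x => f x ^ 2) ν)
    (hg : Integrable (fun x => g x ^ 2) ν) :
    |∫ x, 2 * f x * g x ∂ν| ≤ t * ∫ x, g x ^ 2 ∂ν + t⁻¹ * ∫ x, f x ^ 2 ∂ν := by
  rw [← integral_const_mul, ← integral_const_mul, ← integral_add (hg.const_mul t)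
    (hf.const_mul t⁻¹)]
  exact norm_integral_le_of_norm_le (f := fun x => 2 * f x * g x)
    ((hg.const_mul t).add (hf.const_mul t⁻¹)) (.of_forall fun x => abs_two_mul_le ht (f x) (g x))

lemma l2Sq_const_mul (β : ℝ) (f : ℝ → ℝ) : l2Sq (fun x => β * f x) = β ^ 2 * l2Sq f := by
  simp only [l2Sq, mul_pow, integral_const_mul]

lemma dnormSq_const_mul (β : ℝ) (g : ℝ → ℝ) :
    dnormSq (fun x => β * g x) = β ^ 2 * dnormSq g := by
  simp only [dnormSq, mul_pow, integral_const_mul, mul_add]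

lemma lpP_const_mul {β : ℝ} (hβ : 0 ≤ β) (μ : ℝ) (f : ℝ → ℝ) :
    lpP μ (fun x => β * f x) = β ^ (2 * μ + 2) * lpP μ f := by
  simp only [lpP, abs_mul, abs_of_nonneg hβ, mul_rpow hβ (abs_nonneg _), integral_const_mul]

lemma exists_rescaling {μ Q L ε : ℝ} (hμ : 0 < μ) (hε : 0 < ε) (hQ : 0 ≤ Q)
    (hQL : Q - L ≤ -ε) :
    ∃ β : ℝ, 0 < β ∧ β ^ 2 * Q ≤ β ^ (2 * μ + 2) * L ∧
      β ^ (2 * μ + 2) * L ≤ L - ε / 2 := by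
  have hL : 0 < L := by linarith
  set b := (L - ε / 2) / L with hb
  have hb0 : 0 < b := div_pos (by linarith) hL
  have hb1 : b ≤ 1 := (div_le_one hL).2 (by linarith)
  set β := b ^ (2 * μ)⁻¹
  have hβ : 0 < β := rpow_pos_of_pos hb0 _
  have hβ1 : β ^ 2 ≤ 1 := pow_le_one₀ hβ.le (rpow_le_one hb0.le hb1 (by positivity))
  have hpow : β ^ (2 * μ + 2) * L = β ^ 2 * (L - ε / 2) := by
    rw [rpow_add hβ, ← rpow_mul hb0.le, inv_mul_cancel₀ (by positivity), rpow_one,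
      rpow_two, hb]
    field_simp
  refine ⟨β, hβ, ?_, ?_⟩ <;> rw [hpow]
  · exact mul_le_mul_of_nonneg_left (by linarith) (sq_nonneg β)
  · exact mul_le_of_le_one_left (by linarith) hβ1

namespace HtauFun

variable {τ μ : ℝ} (U : HtauFun τ μ)

lemma aestronglyMeasurable_u : AEStronglyMeasurable U.u := by
  rw [← restrict_compl_singleton (μ := volume) (0 : ℝ)]
  exact ContinuousOn.aestronglyMeasurable
    (fun x hx => (U.hderiv x hx).continuousAt.continuousWithinAt)
    (measurableSet_singleton 0).compl

lemma aestronglyMeasurable_d : AEStronglyMeasurable U.d := by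
  refine (aestronglyMeasurable_deriv U.u volume).congr ?_
  filter_upwards [measure_singleton (0 : ℝ) |> compl_mem_ae_iff.2] with x hx
  exact (U.hderiv x hx).deriv

lemma integrable_two_mul_u_d : Integrable (fun x => 2 * U.u x * U.d x) :=
  Integrable.mono' ((U.hintd.const_mul 1).add (U.hint2.const_mul 1⁻¹))
    ((aestronglyMeasurable_const.mul U.aestronglyMeasurable_u).mul U.aestronglyMeasurable_d)
    (.of_forall fun x => abs_two_mul_le one_pos (U.u x) (U.d x))

lemma hasDerivAt_u_sq {x : ℝ} (hx : x ≠ 0) :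
    HasDerivAt (fun y => U.u y ^ 2) (2 * U.u x * U.d x) x := by
  simpa [mul_comm] using (U.hderiv x hx).fun_pow 2

lemma sq_uR_eq : U.uR ^ 2 = -∫ x in Ioi 0, 2 * U.u x * U.d x := by
  rw [integral_Ioi_eq_neg_of_hasDerivAt_of_tendsto (fun x hx => U.hasDerivAt_u_sq hx.ne')
    (U.hlimR.pow 2) U.hint2.integrableOn U.integrable_two_mul_u_d.integrableOn, neg_neg]

lemma sq_uL_eq : U.uL ^ 2 = ∫ x in Iio 0, 2 * U.u x * U.d x :=
  (integral_Iio_eq_of_hasDerivAt_of_tendsto (fun _ hx => U.hasDerivAt_u_sq hx.ne)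
    (U.hlimL.pow 2) U.hint2.integrableOn U.integrable_two_mul_u_d.integrableOn).symm

lemma l2Sq_eq_add : l2Sq U.u = (∫ x in Iio 0, U.u x ^ 2) + ∫ x in Ioi 0, U.u x ^ 2 := by
  rw [l2Sq, ← integral_add_compl measurableSet_Iio U.hint2, compl_Iio,
    integral_Ici_eq_integral_Ioi]

lemma one_add_sq_mul_sq_uL_le {t : ℝ} (ht : 0 < t) :
    (1 + τ ^ 2) * U.uL ^ 2 ≤ t * dnormSq U.d + t⁻¹ * l2Sq U.u := by
  have hL := abs_integral_two_mul_le ht (U.hint2.integrableOn (s := Iio 0)) U.hintd.integrableOn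
  have hR := abs_integral_two_mul_le ht (U.hint2.integrableOn (s := Ioi 0)) U.hintd.integrableOn
  rw [← U.sq_uL_eq, abs_sq] at hL
  rw [← neg_eq_iff_eq_neg.2 U.sq_uR_eq, abs_neg, abs_sq, U.hjump] at hR
  rw [dnormSq, U.l2Sq_eq_add]
  linarith

lemma l2Sq_nonneg : 0 ≤ l2Sq U.u := integral_nonneg fun _ => sq_nonneg _

lemma quadratic_part_nonneg {v ω : ℝ} (hv : 0 < v) (hω : ω > v ^ 2 / (τ ^ 2 + 1) ^ 2) :
    0 ≤ dnormSq U.d - v * U.uL ^ 2 + ω * l2Sq U.u := by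
  have hτ : 0 < τ ^ 2 + 1 := by positivity
  have htrace := U.one_add_sq_mul_sq_uL_le (div_pos hτ hv)
  have hl2 := U.l2Sq_nonneg
  have : v * U.uL ^ 2 ≤ dnormSq U.d + ω * l2Sq U.u :=
    calc v * U.uL ^ 2 = v / (τ ^ 2 + 1) * ((1 + τ ^ 2) * U.uL ^ 2) := by field_simp; ring
      _ ≤ v / (τ ^ 2 + 1) *
          ((τ ^ 2 + 1) / v * dnormSq U.d + ((τ ^ 2 + 1) / v)⁻¹ * l2Sq U.u) := by gcongr
      _ = dnormSq U.d + v ^ 2 / (τ ^ 2 + 1) ^ 2 * l2Sq U.u := by field_simp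
      _ ≤ dnormSq U.d + ω * l2Sq U.u := by gcongr
  linarith

instance : SMul ℝ (HtauFun τ μ) where
  smul β U :=
    { u := fun x => β * U.u x
      d := fun x => β * U.d x
      uL := β * U.uL
      uR := β * U.uR
      hderiv := fun x hx => (U.hderiv x hx).const_mul β
      hlimL := U.hlimL.const_mul β
      hlimR := U.hlimR.const_mul β
      hint2 := by simpa only [mul_pow] using U.hint2.const_mul (β ^ 2)
      hintd := by simpa only [mul_pow] using U.hintd.const_mul (β ^ 2)
      hintp := by
        simpa only [abs_mul, mul_rpow (abs_nonneg β) (abs_nonneg _)] using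
          U.hintp.const_mul (|β| ^ (2 * μ + 2))
      hjump := by rw [U.hjump, mul_left_comm] }

variable {β : ℝ}

lemma smul_u : (β • U).u = fun x => β * U.u x := rfl

lemma smul_d : (β • U).d = fun x => β * U.d x := rfl

lemma smul_uL : (β • U).uL = β * U.uL := rfl

lemma nonzero_smul (hβ : β ≠ 0) (hU : Nonzero U) : Nonzero (β • U) :=
  fun h => hU <| by
    filter_upwards [h] with x hx
    exact (mul_eq_zero.1 hx).resolve_left hβ

lemma Ifun_smul (hβ : 0 ≤ β) {v ω : ℝ} :
    Ifun v ω μ (β • U).u (β • U).d (β • U).uL =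
      β ^ 2 * (dnormSq U.d - v * U.uL ^ 2 + ω * l2Sq U.u) - β ^ (2 * μ + 2) * lpP μ U.u := by
  rw [Ifun, smul_u, smul_d, smul_uL, l2Sq_const_mul, dnormSq_const_mul, lpP_const_mul hβ]
  ring

lemma StilF_smul (hβ : 0 ≤ β) :
    StilF μ (β • U).u = β ^ (2 * μ + 2) * StilF μ U.u := by
  rw [StilF, StilF, smul_u, lpP_const_mul hβ]
  ring

end HtauFun

lemma StilF_nonneg {μ : ℝ} (hμ : 0 ≤ μ) (f : ℝ → ℝ) : 0 ≤ StilF μ f :=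
  mul_nonneg (by positivity) (integral_nonneg fun _ => by positivity)

lemma dInf'_le_StilF {τ v ω μ : ℝ} (hμ : 0 ≤ μ) {U : HtauFun τ μ} (hU : Nonzero U)
    (hI : Ifun v ω μ U.u U.d U.uL ≤ 0) : dInf' τ v ω μ ≤ StilF μ U.u :=
  csInf_le ⟨0, by rintro _ ⟨V, -, -, rfl⟩; exact StilF_nonneg hμ V.u⟩ ⟨U, hU, hI, rfl⟩

lemma dInf'_le_StilF_sub {τ v ω μ ε : ℝ} (hv : 0 < v) (hμ : 0 < μ)
    (hω : ω > v ^ 2 / (τ ^ 2 + 1) ^ 2) {U : HtauFun τ μ} (hU : Nonzero U) (hε : 0 < ε)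
    (hI : Ifun v ω μ U.u U.d U.uL ≤ -ε) :
    dInf' τ v ω μ ≤ StilF μ U.u - μ / (2 * (μ + 1)) * (ε / 2) := by
  obtain ⟨β, hβ, hIβ, hLβ⟩ := exists_rescaling (L := lpP μ U.u) hμ hε
    (U.quadratic_part_nonneg hv hω) (by rw [Ifun] at hI; linarith)
  have hIβU : Ifun v ω μ (β • U).u (β • U).d (β • U).uL ≤ 0 := by
    rw [U.Ifun_smul hβ.le]; linarith
  calc dInf' τ v ω μ ≤ StilF μ (β • U).u :=
        dInf'_le_StilF hμ.le (U.nonzero_smul hβ.ne' hU) hIβU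
    _ = μ / (2 * (μ + 1)) * (β ^ (2 * μ + 2) * lpP μ U.u) := by
        rw [U.StilF_smul hβ.le, StilF]; ring
    _ ≤ μ / (2 * (μ + 1)) * (lpP μ U.u - ε / 2) := by gcongr
    _ = StilF μ U.u - μ / (2 * (μ + 1)) * (ε / 2) := by rw [StilF]; ring

theorem minimizing_sequence_nehari_limit_general
    (τ v ω μ : ℝ)
    (hv : 0 < v) (hμ : 0 < μ) (hω : ω > v ^ 2 / (τ ^ 2 + 1) ^ 2)
    (U : ℕ → HtauFun τ μ) (hnz : ∀ n, Nonzero (U n))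
    (hI : ∀ n, Ifun v ω μ (U n).u (U n).d (U n).uL ≤ 0)
    (hS : Tendsto (fun n => StilF μ (U n).u) atTop (nhds (dInf' τ v ω μ))) :
    Tendsto (fun n => Ifun v ω μ (U n).u (U n).d (U n).uL) atTop (nhds 0) := by
  rw [tendsto_order]
  refine ⟨fun a ha => ?_, fun a ha => .of_forall fun n => (hI n).trans_lt ha⟩
  have hε : 0 < -a := neg_pos.2 ha
  have hgap : 0 < μ / (2 * (μ + 1)) * (-a / 2) := by positivity
  filter_upwards [hS.eventually (eventually_lt_nhds (lt_add_of_pos_right _ hgap))] with n hn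
  by_contra! hIn
  have := dInf'_le_StilF_sub hv hμ hω (hnz n) hε (by rwa [neg_neg])
  linarith

/-- along any minimizing sequence for `S̃` over `{I_ω ≤ 0}`,
the Nehari functional tends to `0`. -/
theorem minimizing_sequence_nehari_limit
    (τ v ω μ : ℝ) (hτ0 : τ ≠ 0) (hτ1 : τ ≠ 1) (hτm1 : τ ≠ -1)
    (hv : 0 < v) (hμ : 0 < μ) (hω : ω > v ^ 2 / (τ ^ 2 + 1) ^ 2)
    (U : ℕ → HtauFun τ μ) (hnz : ∀ n, Nonzero (U n))
    (hI : ∀ n, Ifun v ω μ (U n).u (U n).d (U n).uL ≤ 0)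
    (hS : Tendsto (fun n => StilF μ (U n).u) atTop (nhds (dInf' τ v ω μ))) :
    Tendsto (fun n => Ifun v ω μ (U n).u (U n).d (U n).uL) atTop (nhds 0) :=
  minimizing_sequence_nehari_limit_general τ v ω μ hv hμ hω U hnz hI hS
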